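/- Let Q_X and Q_Y be primitive strings with |Q_X| ≤ |Q_Y| such that |Q_Y| is not a multiple of |Q_X|. Then for every integer j with 1 ≤ j ≤ |Q_X|, hd(Q_Y·Q_Y, rot^j(Q_X)^∞[1..2|Q_Y|]) ≥ 1, and consequently for every integer m ≥ 1, hd(Q_Y^∞[1..m], Q_X^∞[1..m]) ≥ ⌊m/(2|Q_Y|)⌋. -/

import Mathlib

variable {α : Type*}

/-- Hamming distance: the number of positions at which two (equal-length) strings differ. -/
def hamDist [DecidableEq α] (S T : List α) : ℕ :=
  ((S.zip T).filter fun c => decide (c.1 ≠ c.2)).length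

/-- 1-based substring `T[i..j]` (inclusive). -/
def substr (T : List α) (i j : ℕ) : List α := (T.drop (i - 1)).take (j - i + 1)

/-- `Q^m`: the concatenation of `m` copies of `Q`. -/
def listPow (Q : List α) (m : ℕ) : List α := (List.replicate m Q).flatten

/-- `Q^∞[a..b]`: the segment from position `a` through `b` (1-based) of the infinite
periodic string `Q^∞` with `Q^∞[i] = Q[((i−1) mod |Q|) + 1]`. -/
def infSeg (Q : List α) (a b : ℕ) : List α := substr (listPow Q b) a b

/-- A nonempty string is primitive if it is not a power of a strictly shorter string,
i.e. it equals `R^m` only for `m = 1`. -/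
def PrimitiveStr (Q : List α) : Prop :=
  Q ≠ [] ∧ ∀ (R : List α) (m : ℕ), Q = listPow R m → m = 1

/-- The forward cyclic rotation `rot(S) = S[m]·S[1..m−1]`. -/
def rot (S : List α) : List α := S.rotate (S.length - 1)

/-- `p` is a `k`-mismatch period of `T`: `1 ≤ p ≤ |T|` and
`hd(T[1..n−p+1], T[p..n]) ≤ k`. -/
def IsMismatchPeriod [DecidableEq α] (k p : ℕ) (T : List α) : Prop :=
  1 ≤ p ∧ p ≤ T.length ∧
    hamDist (substr T 1 (T.length - p + 1)) (substr T p T.length) ≤ k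

/-!
If `Q_Y Q_Y` agreed everywhere with a window of the shifted string `Q_X^∞`, that shifted string
would have period `|Q_X|` and (because `|Q_X| ≤ |Q_Y|`) period `|Q_Y|`, hence period
`gcd(|Q_X|, |Q_Y|)`, a proper divisor of `|Q_X|` since `|Q_X| ∤ |Q_Y|`; then `Q_X` would be a
proper power. Each block of length `2|Q_Y|` of `Q_Y^∞` against `Q_X^∞` is such a comparison, so
every block contains a mismatch.
-/

open Function Finset

/-- `infGet Q i = Q^∞[i + 1]`: the index is 0-based, and the value is `none` only if `Q = []`. -/
def infGet (Q : List α) (i : ℕ) : Option α := Q[i % Q.length]?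

lemma periodic_infGet (Q : List α) : Periodic (infGet Q) Q.length := fun i => by
  simp [infGet]

lemma infGet_rotate (S : List α) (k i : ℕ) : infGet (S.rotate k) i = infGet S (i + k) := by
  rcases eq_or_ne S [] with rfl | hS
  · simp [infGet]
  · have hS0 : 0 < S.length := List.length_pos_iff.mpr hS
    rw [infGet, infGet, List.length_rotate, List.getElem?_rotate (Nat.mod_lt _ hS0),
      Nat.mod_add_mod]

lemma rot_iterate (S : List α) (j : ℕ) : rot^[j] S = S.rotate (j * (S.length - 1)) := by
  induction j with
  | zero => simp
  | succ j ih =>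
    rw [iterate_succ_apply', ih, rot, List.length_rotate, List.rotate_rotate, Nat.succ_mul]

lemma length_listPow (Q : List α) (m : ℕ) : (listPow Q m).length = m * Q.length := by
  simp [listPow]

lemma getElem?_listPow (Q : List α) {m i : ℕ} (hi : i < m * Q.length) :
    (listPow Q m)[i]? = infGet Q i := by
  induction m generalizing i with
  | zero => omega
  | succ m ih =>
    rw [show listPow Q (m + 1) = Q ++ listPow Q m by simp [listPow, List.replicate_succ],
      List.getElem?_append]
    by_cases hiQ : i < Q.length
    · simp [hiQ, infGet, Nat.mod_eq_of_lt hiQ]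
    · rw [if_neg hiQ, ih (by rw [Nat.succ_mul] at hi; omega), infGet, infGet,
        Nat.mod_eq_sub_mod (not_lt.mp hiQ)]

lemma infSeg_one_eq_take (Q : List α) (b : ℕ) : infSeg Q 1 b = (listPow Q b).take b := by
  rcases Nat.eq_zero_or_pos b with rfl | hb
  · simp [infSeg, substr, listPow]
  · simp [infSeg, substr, Nat.sub_add_cancel hb]

lemma length_infSeg_one {Q : List α} (hQ : Q ≠ []) (b : ℕ) : (infSeg Q 1 b).length = b := by
  have : b ≤ b * Q.length := Nat.le_mul_of_pos_right b (List.length_pos_iff.mpr hQ)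
  simp [infSeg_one_eq_take, length_listPow, this]

lemma getElem?_infSeg_one (Q : List α) {b i : ℕ} (hi : i < b) :
    (infSeg Q 1 b)[i]? = infGet Q i := by
  rcases eq_or_ne Q [] with rfl | hQ
  · simp [infSeg_one_eq_take, listPow, infGet]
  · rw [infSeg_one_eq_take, List.getElem?_take, if_pos hi,
      getElem?_listPow Q (lt_of_lt_of_le hi (Nat.le_mul_of_pos_right b
        (List.length_pos_iff.mpr hQ)))]

lemma infSeg_one_mul_length (Q : List α) (k : ℕ) : infSeg Q 1 (k * Q.length) = listPow Q k := by
  apply List.ext_getElem?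
  intro i
  by_cases hi : i < k * Q.length
  · rw [getElem?_infSeg_one Q hi, getElem?_listPow Q hi]
  · have hseg : (infSeg Q 1 (k * Q.length)).length ≤ k * Q.length := by
      rw [infSeg_one_eq_take]; exact List.length_take_le _ _
    rw [List.getElem?_eq_none (by omega), List.getElem?_eq_none (by rw [length_listPow]; omega)]

lemma hamDist_cons [DecidableEq α] (a b : α) (S T : List α) :
    hamDist (a :: S) (b :: T) = (if a = b then 0 else 1) + hamDist S T := by
  by_cases hab : a = b <;> simp [hamDist, hab, Nat.add_comm]

lemma hamDist_eq_card_filter [DecidableEq α] {S T : List α} (h : S.length = T.length) :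
    hamDist S T = #{i ∈ range S.length | S[i]? ≠ T[i]?} := by
  induction S generalizing T with
  | nil => cases T <;> simp_all [hamDist]
  | cons a S ih =>
    cases T with
    | nil => simp at h
    | cons b T =>
      rw [hamDist_cons, ih (Nat.succ.inj h), card_filter, card_filter, List.length_cons,
        sum_range_succ', Nat.add_comm]
      by_cases hab : a = b <;> simp [hab]

lemma hamDist_infSeg_one_eq_card [DecidableEq α] {P Q : List α} (hP : P ≠ []) (hQ : Q ≠ []) (m : ℕ) :
    hamDist (infSeg P 1 m) (infSeg Q 1 m) = #{i ∈ range m | infGet P i ≠ infGet Q i} := by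
  rw [hamDist_eq_card_filter (by rw [length_infSeg_one hP, length_infSeg_one hQ]),
    length_infSeg_one hP]
  congr 1
  apply filter_congr
  intro i hi
  rw [mem_range] at hi
  rw [getElem?_infSeg_one P hi, getElem?_infSeg_one Q hi]

namespace Function.Periodic

variable {β : Type*} {f : ℕ → β} {a b : ℕ}

lemma mod_nat (ha : Periodic f a) (hb : Periodic f b) : Periodic f (a % b) := fun i => by
  calc f (i + a % b) = f (i + a % b + a / b * b) := (hb.nat_mul (a / b) _).symm
    _ = f (i + a) := by rw [Nat.add_assoc, Nat.mod_add_div']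
    _ = f i := ha i

lemma gcd_nat (ha : Periodic f a) (hb : Periodic f b) : Periodic f (a.gcd b) := by
  induction a, b using Nat.gcd.induction with
  | H0 b => simpa using hb
  | H1 a b _ ih => rw [Nat.gcd_rec]; exact ih (hb.mod_nat ha) ha

lemma of_add_const {t : ℕ} (ha : Periodic f a) (ha0 : 0 < a)
    (hb : Periodic (fun x => f (x + t)) b) : Periodic f b := by
  have hshift : (fun x => f (x + (a - 1) * t + t)) = f := by
    funext x
    rw [Nat.add_assoc, ← Nat.succ_mul, Nat.succ_eq_add_one, Nat.sub_add_cancel ha0, Nat.mul_comm]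
    exact ha.nat_mul t x
  simpa only [hshift] using hb.add_const ((a - 1) * t)

lemma of_forall_lt (ha : Periodic f a) (ha0 : 0 < a) (hab : a ≤ b)
    (h : ∀ i < b, f (i + b) = f i) : Periodic f b := fun i => by
  have hi : i % a < b := lt_of_lt_of_le (Nat.mod_lt _ ha0) hab
  calc f (i + b) = f ((i + b) % a) := (ha.map_mod_nat _).symm
    _ = f ((i % a + b) % a) := by rw [Nat.mod_add_mod]
    _ = f (i % a + b) := ha.map_mod_nat _
    _ = f (i % a) := h _ hi
    _ = f i := ha.map_mod_nat i

end Function.Periodic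

lemma eq_listPow_take_of_periodic {Q : List α} {g : ℕ} (hg : 0 < g) (hdvd : g ∣ Q.length)
    (hper : Periodic (infGet Q) g) : Q = listPow (Q.take g) (Q.length / g) := by
  obtain rfl | hQ := eq_or_ne Q []
  · simp [listPow]
  have hgQ : g ≤ Q.length := Nat.le_of_dvd (List.length_pos_iff.mpr hQ) hdvd
  have htake : (Q.take g).length = g := by simp [hgQ]
  apply List.ext_getElem?
  intro i
  by_cases hi : i < Q.length
  · rw [getElem?_listPow _ (by rwa [htake, Nat.div_mul_cancel hdvd])]
    calc Q[i]? = infGet Q i := by rw [infGet, Nat.mod_eq_of_lt hi]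
      _ = infGet Q (i % g) := (hper.map_mod_nat i).symm
      _ = infGet (Q.take g) i := by
        rw [infGet, infGet, htake, List.getElem?_take, if_pos (Nat.mod_lt _ hg),
          Nat.mod_eq_of_lt (lt_of_lt_of_le (Nat.mod_lt _ hg) hgQ)]
  · rw [List.getElem?_eq_none (by omega), List.getElem?_eq_none
      (by rw [length_listPow, htake, Nat.div_mul_cancel hdvd]; omega)]

lemma PrimitiveStr.eq_length_of_periodic {Q : List α} (hQ : PrimitiveStr Q) {g : ℕ} (hg : 0 < g)
    (hdvd : g ∣ Q.length) (hper : Periodic (infGet Q) g) : g = Q.length := by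
  have hpow := hQ.2 _ _ (eq_listPow_take_of_periodic hg hdvd hper)
  rw [← Nat.div_mul_cancel hdvd, hpow, one_mul]

lemma PrimitiveStr.length_dvd_of_agree {QX QY : List α} (hQX : PrimitiveStr QX)
    (hle : QX.length ≤ QY.length) {t : ℕ}
    (h : ∀ i < 2 * QY.length, infGet QY i = infGet QX (i + t)) : QX.length ∣ QY.length := by
  have hX0 : 0 < QX.length := List.length_pos_iff.mpr hQX.1
  have hfX : Periodic (fun i => infGet QX (i + t)) QX.length := (periodic_infGet QX).add_const t
  have hfY : Periodic (fun i => infGet QX (i + t)) QY.length :=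
    hfX.of_forall_lt hX0 hle fun i hi => by
      show infGet QX (i + QY.length + t) = infGet QX (i + t)
      rw [← h _ (by omega), ← h i (by omega), periodic_infGet QY i]
  have hgcd : Periodic (infGet QX) (QX.length.gcd QY.length) :=
    (periodic_infGet QX).of_add_const hX0 (hfX.gcd_nat hfY)
  rw [← hQX.eq_length_of_periodic (Nat.gcd_pos_of_pos_left _ hX0) (Nat.gcd_dvd_left _ _) hgcd]
  exact Nat.gcd_dvd_right _ _

lemma div_le_card_filter_range {p : ℕ → Prop} [DecidablePred p] {B : ℕ}
    (h : ∀ k, ∃ i, B * k ≤ i ∧ i < B * k + B ∧ p i) (m : ℕ) :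
    m / B ≤ #{i ∈ range m | p i} := by
  have blocks : ∀ n, n ≤ #{i ∈ range (B * n) | p i} := by
    intro n
    induction n with
    | zero => simp
    | succ n ih =>
      obtain ⟨i, hi₁, hi₂, hpi⟩ := h n
      have hnew : i ∉ {i ∈ range (B * n) | p i} := by simp; omega
      have hsub : insert i {i ∈ range (B * n) | p i} ⊆ {i ∈ range (B * (n + 1)) | p i} := by
        intro x hx
        simp only [mem_insert, mem_filter, mem_range] at hx ⊢
        rw [Nat.mul_succ]
        rcases hx with rfl | ⟨hx, hpx⟩
        · exact ⟨hi₂, hpi⟩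
        · exact ⟨by omega, hpx⟩
      calc n + 1 ≤ #(insert i {i ∈ range (B * n) | p i}) := by
            rw [card_insert_of_notMem hnew]; omega
        _ ≤ _ := card_le_card hsub
  calc m / B ≤ #{i ∈ range (B * (m / B)) | p i} := blocks _
    _ ≤ _ := card_le_card (filter_subset_filter _ (range_subset_range.mpr (Nat.mul_div_le m B)))

theorem prim_nonmultiple_mismatch_general [DecidableEq α] (QX QY : List α)
    (hQX : PrimitiveStr QX)
    (hle : QX.length ≤ QY.length) (hnd : ¬ QX.length ∣ QY.length) :
    (∀ j : ℕ, 1 ≤ j → j ≤ QX.length →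
      1 ≤ hamDist (QY ++ QY) (infSeg (rot^[j] QX) 1 (2 * QY.length))) ∧
      ∀ m : ℕ, 1 ≤ m →
        m / (2 * QY.length) ≤ hamDist (infSeg QY 1 m) (infSeg QX 1 m) := by
  have hX : QX ≠ [] := hQX.1
  have hY : QY ≠ [] := List.length_pos_iff.mp (lt_of_lt_of_le (List.length_pos_iff.mpr hX) hle)
  have mismatch : ∀ t, ∃ i < 2 * QY.length, infGet QY i ≠ infGet QX (i + t) := fun t => by
    by_contra! hagree
    exact hnd (hQX.length_dvd_of_agree hle hagree)
  refine ⟨fun j _ _ => ?_, fun m _ => ?_⟩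
  · have hP : rot^[j] QX ≠ [] := by rwa [rot_iterate, Ne, List.rotate_eq_nil_iff]
    obtain ⟨i, hi, hne⟩ := mismatch (j * (QX.length - 1))
    rw [show QY ++ QY = infSeg QY 1 (2 * QY.length) by
        rw [infSeg_one_mul_length]; simp [listPow],
      hamDist_infSeg_one_eq_card hY hP, Nat.one_le_iff_ne_zero, Ne, card_eq_zero,
      filter_eq_empty_iff, not_forall]
    exact ⟨i, by simpa [rot_iterate, infGet_rotate] using ⟨hi, hne⟩⟩
  · rw [hamDist_infSeg_one_eq_card hY hX]
    refine div_le_card_filter_range (fun k => ?_) m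
    obtain ⟨i, hi, hne⟩ := mismatch (2 * QY.length * k)
    refine ⟨2 * QY.length * k + i, by omega, by omega, ?_⟩
    have hYper : infGet QY (i + 2 * QY.length * k) = infGet QY i := by
      rw [show 2 * QY.length * k = 2 * k * QY.length by ring]
      exact (periodic_infGet QY).nat_mul (2 * k) i
    rwa [Nat.add_comm, hYper]

/-- if `Q_X`, `Q_Y` are primitive, `|Q_X| ≤ |Q_Y|` and `|Q_Y|` is not a
multiple of `|Q_X|`, then for every `1 ≤ j ≤ |Q_X|`,
`hd(Q_Y·Q_Y, rot^j(Q_X)^∞[1..2|Q_Y|]) ≥ 1`, and for every `m ≥ 1`,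
`hd(Q_Y^∞[1..m], Q_X^∞[1..m]) ≥ ⌊m/(2|Q_Y|)⌋`. -/
theorem prim_nonmultiple_mismatch [DecidableEq α] (QX QY : List α)
    (hQX : PrimitiveStr QX) (hQY : PrimitiveStr QY)
    (hle : QX.length ≤ QY.length) (hnd : ¬ QX.length ∣ QY.length) :
    (∀ j : ℕ, 1 ≤ j → j ≤ QX.length →
      1 ≤ hamDist (QY ++ QY) (infSeg (rot^[j] QX) 1 (2 * QY.length))) ∧
      ∀ m : ℕ, 1 ≤ m →
        m / (2 * QY.length) ≤ hamDist (infSeg QY 1 m) (infSeg QX 1 m) :=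
  prim_nonmultiple_mismatch_general QX QY hQX hle hnd
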